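/- Let U ≥ 0 be a real number. For every real ν ≥ 0 and every real z with 0 < z < 2^{U+1}, the exponentially scaled modified Bessel function satisfies e^z·K_ν(z) > √(π/(2z + 1/2)) > 2^{−(U+1)/2}. (Hence, in a floating-point system with smallest exponent L ≤ −(U+1)/2, the exponentially scaled function e^z·K_ν(z) never underflows.) -/

import Mathlib

/-!
Replacing `cosh (ν t)` by `1` only decreases the integral, and the substitution `s = sinh (t / 2)`,
for which `cosh t = 1 + 2 s²` and `dt = 2 ds / √(1 + s²)`, gives
`e^z K₀(z) = 2 ∫₀^∞ e^{-2 z s²} / √(1 + s²) ds`. Since `√(1 + s²) < e^{s² / 2}` for `s ≠ 0`, this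
integrand exceeds the Gaussian `e^{-(2 z + 1/2) s²}`, whose integral is `√(π / (2 z + 1/2)) / 2`.
The second inequality amounts to `2 z + 1/2 < π 2^{U+1}`, which holds because `2^{U+1} ≥ 2`.
-/

open Real MeasureTheory

/-- Modified Bessel function of the second kind, via its integral representation. -/
noncomputable def besselK (ν z : ℝ) : ℝ :=
  ∫ t in Set.Ioi (0 : ℝ), Real.exp (-z * Real.cosh t) * Real.cosh (ν * t)

open Set Filter

lemma setIntegral_lt_setIntegral_of_forall_lt {X : Type*} [MeasurableSpace X] {μ : Measure X}
    {s : Set X} {f g : X → ℝ} (hs : MeasurableSet s) (hμs : μ s ≠ 0)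
    (hf : IntegrableOn f s μ) (hg : IntegrableOn g s μ) (hlt : ∀ x ∈ s, f x < g x) :
    ∫ x in s, f x ∂μ < ∫ x in s, g x ∂μ := by
  have hpos : ∀ x ∈ s, 0 < g x - f x := fun x hx => sub_pos.2 (hlt x hx)
  have hsupp : s ⊆ Function.support fun x => g x - f x := fun x hx => (hpos x hx).ne'
  rw [← sub_pos, ← integral_sub hg hf, setIntegral_pos_iff_support_of_nonneg_ae
    ((ae_restrict_iff' hs).2 (Eventually.of_forall fun x hx => (hpos x hx).le)) (hg.sub hf),
    inter_eq_right.2 hsupp]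
  exact pos_iff_ne_zero.2 hμs

lemma cosh_le_exp_abs (x : ℝ) : cosh x ≤ exp |x| := by
  rw [cosh_eq]
  linarith [exp_le_exp.2 (le_abs_self x), exp_le_exp.2 (neg_le_abs x)]

lemma cosh_eq_one_add_two_mul_sinh_half_sq (t : ℝ) : cosh t = 1 + 2 * sinh (t / 2) ^ 2 := by
  rw [show cosh t = cosh (2 * (t / 2)) by ring_nf, cosh_two_mul, cosh_sq']
  ring

lemma one_add_sq_div_two_le_cosh (t : ℝ) : 1 + t ^ 2 / 2 ≤ cosh t := by
  have h : |t| / 2 ≤ sinh (|t| / 2) := self_le_sinh_iff.2 (by positivity)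
  have h2 : (|t| / 2) ^ 2 ≤ sinh (|t| / 2) ^ 2 := pow_le_pow_left₀ (by positivity) h 2
  rw [← cosh_abs, cosh_eq_one_add_two_mul_sinh_half_sq, ← sq_abs t]
  linarith

lemma sqrt_one_add_sq_lt_exp {s : ℝ} (hs : s ≠ 0) : √(1 + s ^ 2) < exp (s ^ 2 / 2) := by
  rw [sqrt_lt' (exp_pos _), ← exp_nat_mul, Nat.cast_ofNat, mul_div_cancel₀ _ two_ne_zero]
  linarith [add_one_lt_exp (pow_ne_zero 2 hs)]

lemma exp_neg_mul_cosh_mul_cosh_le (ν : ℝ) {z t : ℝ} (hz : 0 < z) (ht : 0 ≤ t) :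
    exp (-z * cosh t) * cosh (ν * t) ≤ exp ((|ν| + 1) ^ 2 / (2 * z)) * exp (-t) := by
  have hcosh : cosh (ν * t) ≤ exp (|ν| * t) := by
    simpa [abs_mul, abs_of_nonneg ht] using cosh_le_exp_abs (ν * t)
  -- `a t - z t² / 2 ≤ a² / (2 z)` with `a = |ν| + 1`, by completing the square
  have hexponent : -z * cosh t + |ν| * t ≤ (|ν| + 1) ^ 2 / (2 * z) + -t := by
    have hsq : (|ν| + 1) * t - z * t ^ 2 / 2 ≤ (|ν| + 1) ^ 2 / (2 * z) := by
      rw [le_div_iff₀ (by positivity)]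
      nlinarith [sq_nonneg (|ν| + 1 - z * t)]
    nlinarith [mul_le_mul_of_nonneg_left (one_add_sq_div_two_le_cosh t) hz.le]
  calc exp (-z * cosh t) * cosh (ν * t) ≤ exp (-z * cosh t) * exp (|ν| * t) := by gcongr
    _ ≤ exp ((|ν| + 1) ^ 2 / (2 * z)) * exp (-t) := by
      rw [← exp_add, ← exp_add]
      exact exp_le_exp.2 hexponent

lemma integrableOn_exp_neg_mul_cosh_mul_cosh (ν : ℝ) {z : ℝ} (hz : 0 < z) :
    IntegrableOn (fun t => exp (-z * cosh t) * cosh (ν * t)) (Ioi 0) := by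
  refine ((exp_neg_integrableOn_Ioi 0 one_pos).const_mul
    (exp ((|ν| + 1) ^ 2 / (2 * z)))).mono' (by fun_prop) ?_
  refine (ae_restrict_iff' measurableSet_Ioi).2 (Eventually.of_forall fun t ht => ?_)
  rw [norm_of_nonneg (by positivity), neg_one_mul]
  exact exp_neg_mul_cosh_mul_cosh_le ν hz (le_of_lt ht)

lemma besselK_zero_le (ν : ℝ) {z : ℝ} (hz : 0 < z) : besselK 0 z ≤ besselK ν z := by
  refine setIntegral_mono_on (integrableOn_exp_neg_mul_cosh_mul_cosh 0 hz)
    (integrableOn_exp_neg_mul_cosh_mul_cosh ν hz) measurableSet_Ioi fun t _ => ?_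
  rw [zero_mul, cosh_zero, mul_one]
  exact le_mul_of_one_le_right (exp_pos _).le (one_le_cosh _)

lemma integrable_exp_neg_mul_sq_div_sqrt_one_add_sq {b : ℝ} (hb : 0 < b) :
    Integrable fun s : ℝ => exp (-b * s ^ 2) / √(1 + s ^ 2) := by
  refine (integrable_exp_neg_mul_sq hb).mono' (Measurable.aestronglyMeasurable (by fun_prop))
    (Eventually.of_forall fun s => ?_)
  rw [norm_of_nonneg (by positivity)]
  exact div_le_self (exp_pos _).le (one_le_sqrt.2 (by nlinarith))

lemma exp_mul_besselK_zero {z : ℝ} (hz : 0 < z) :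
    exp z * besselK 0 z = 2 * ∫ s in Ioi 0, exp (-(2 * z) * s ^ 2) / √(1 + s ^ 2) := by
  set g : ℝ → ℝ := fun s => exp (-(2 * z) * s ^ 2) / √(1 + s ^ 2)
  have hsubst : ∀ t, (g ∘ fun t => sinh (t / 2)) t * (cosh (t / 2) / 2)
      = exp z * (exp (-z * cosh t) * cosh (0 * t)) / 2 := by
    intro t
    have hsqrt : √(1 + sinh (t / 2) ^ 2) = cosh (t / 2) := by
      rw [← cosh_sq', sqrt_sq (cosh_pos _).le]
    simp only [g, Function.comp_apply, hsqrt, zero_mul, cosh_zero, mul_one, ← exp_add,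
      cosh_eq_one_add_two_mul_sinh_half_sq t]
    field_simp [(cosh_pos (t / 2)).ne']
    ring_nf
  have hderiv : ∀ t ∈ Ioi (0 : ℝ),
      HasDerivWithinAt (fun t => sinh (t / 2)) (cosh (t / 2) / 2) (Ioi t) t := fun t _ =>
    (((hasDerivAt_id t).div_const 2).sinh.congr_deriv (by simp [div_eq_mul_inv])).hasDerivWithinAt
  have htendsto : Tendsto (fun t : ℝ => sinh (t / 2)) atTop atTop :=
    sinhOrderIso.tendsto_atTop.comp (tendsto_id.atTop_div_const two_pos)
  have hcont : Continuous g :=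
    (by fun_prop : Continuous _).div (by fun_prop) fun s => (sqrt_pos.2 (by positivity)).ne'
  have hint := integrable_exp_neg_mul_sq_div_sqrt_one_add_sq (b := 2 * z) (by positivity)
  have hchange := integral_comp_mul_deriv_Ioi (by fun_prop) htendsto hderiv
    hcont.continuousOn hint.integrableOn (by
      rw [funext hsubst, integrableOn_Ici_iff_integrableOn_Ioi]
      exact ((integrableOn_exp_neg_mul_cosh_mul_cosh 0 hz).const_mul _).div_const _)
  rw [funext hsubst, integral_div, integral_const_mul, div_eq_iff two_ne_zero,
    zero_div, sinh_zero] at hchange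
  exact hchange.trans (mul_comm _ _)

lemma sqrt_pi_div_add_half_lt_integral {b : ℝ} (hb : 0 < b) :
    √(π / (b + 1 / 2)) / 2 < ∫ s in Ioi 0, exp (-b * s ^ 2) / √(1 + s ^ 2) := by
  rw [← integral_gaussian_Ioi]
  refine setIntegral_lt_setIntegral_of_forall_lt measurableSet_Ioi (by simp)
    (integrable_exp_neg_mul_sq (by positivity)).integrableOn
    (integrable_exp_neg_mul_sq_div_sqrt_one_add_sq hb).integrableOn fun s hs => ?_
  have hexp : exp (-(b + 1 / 2) * s ^ 2) * exp (s ^ 2 / 2) = exp (-b * s ^ 2) := by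
    rw [← exp_add]
    ring_nf
  rw [lt_div_iff₀ (sqrt_pos.2 (by positivity)), ← hexp]
  exact mul_lt_mul_of_pos_left (sqrt_one_add_sq_lt_exp (ne_of_gt hs)) (exp_pos _)

lemma two_rpow_neg_half_lt_sqrt_pi_div {U z : ℝ} (hU : 0 ≤ U) (hz : 0 < z)
    (hz' : z < 2 ^ (U + 1)) : (2 : ℝ) ^ (-(U + 1) / 2) < √(π / (2 * z + 1 / 2)) := by
  have htwo : (2 : ℝ) ≤ 2 ^ (U + 1) := by
    simpa using rpow_le_rpow_of_exponent_le one_le_two (by linarith : (1 : ℝ) ≤ U + 1)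
  have hlt : 2 * z + 1 / 2 < 2 ^ (U + 1) * π := by nlinarith [pi_gt_three]
  rw [neg_div, rpow_neg zero_le_two, div_eq_mul_inv, rpow_mul zero_le_two, inv_eq_one_div 2,
    ← sqrt_eq_rpow, ← sqrt_inv]
  refine sqrt_lt_sqrt (by positivity) ?_
  rwa [lt_div_iff₀ (by positivity), inv_mul_lt_iff₀ (by positivity)]

theorem exp_scaled_no_underflow_general (U : ℝ) (hU : 0 ≤ U) (ν z : ℝ)
    (hz : 0 < z) (hz' : z < (2 : ℝ) ^ (U + 1)) :
    Real.exp z * besselK ν z > Real.sqrt (π / (2 * z + 1 / 2)) ∧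
      Real.sqrt (π / (2 * z + 1 / 2)) > (2 : ℝ) ^ (-(U + 1) / 2) := by
  refine ⟨?_, two_rpow_neg_half_lt_sqrt_pi_div hU hz hz'⟩
  calc √(π / (2 * z + 1 / 2)) = 2 * (√(π / (2 * z + 1 / 2)) / 2) := by ring
    _ < 2 * ∫ s in Ioi 0, exp (-(2 * z) * s ^ 2) / √(1 + s ^ 2) := by
      gcongr
      exact sqrt_pi_div_add_half_lt_integral (by positivity)
    _ = exp z * besselK 0 z := (exp_mul_besselK_zero hz).symm
    _ ≤ exp z * besselK ν z := by
      gcongr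
      exact besselK_zero_le ν hz

theorem exp_scaled_no_underflow (U : ℝ) (hU : 0 ≤ U) (ν z : ℝ) (hν : 0 ≤ ν)
    (hz : 0 < z) (hz' : z < (2 : ℝ) ^ (U + 1)) :
    Real.exp z * besselK ν z > Real.sqrt (π / (2 * z + 1 / 2)) ∧
      Real.sqrt (π / (2 * z + 1 / 2)) > (2 : ℝ) ^ (-(U + 1) / 2) :=
  exp_scaled_no_underflow_general U hU ν z hz hz'
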